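/- Suppose c < 3/5 and Q is a nonnegative, not identically zero, smooth decaying solution of ((5/4)c - 3/4)D^α Q + (c-1)Q - (1/2)Q^{p+1} = 0. Then a contradiction follows; i.e., the equation has no nontrivial nonnegative solutions for c < 3/5 (indeed no positive solitary waves unless c > 1). -/

import Mathlib

/-- The Riesz fractional derivative `D^α`, Fourier multiplier with symbol `|ξ|^α`. -/
noncomputable def fracD (α : ℝ) (f : ℝ → ℂ) : ℝ → ℂ :=
  FourierTransformInv.fourierInv (fun ξ : ℝ => (|ξ| ^ α : ℝ) • FourierTransform.fourier f ξ)

/-- `D^α` acting on real-valued functions. -/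
noncomputable def fracDR (α : ℝ) (f : ℝ → ℝ) : ℝ → ℝ :=
  fun x => (fracD α (fun y => (f y : ℂ)) x).re

/-!
Multiplying the profile equation by `Q` and integrating gives
`((5/4)c - 3/4) ∫ Q D^α Q = (1/2) ∫ Q^{p+2} + (1 - c) ∫ Q²`. By Parseval,
`∫ Q D^α Q = ∫ |ξ|^α |𝓕 Q ξ|² ≥ 0`, so for `c < 3/5` the left side is `≤ 0` while the right side
is `≥ (1 - c) ∫ Q² ≥ 0`. Hence `∫ Q² = 0`, and `Q = 0` by continuity.
-/

open MeasureTheory FourierTransform ComplexConjugate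

section FourierMultiplier

variable {V : Type*} [NormedAddCommGroup V] [InnerProductSpace ℝ V] [FiniteDimensional ℝ V]
  [MeasurableSpace V] [BorelSpace V]

lemma Real.fourierInv_eq_zero_of_not_integrable {h : V → ℂ} (hh : ¬Integrable h) : 𝓕⁻ h = 0 := by
  ext w
  rw [Real.fourierInv_eq_fourier_neg, Real.fourier_eq]
  exact integral_undef (by rwa [Real.fourierIntegral_convergent_iff])

lemma Real.continuous_fourierInv {h : V → ℂ} (hh : Integrable h) : Continuous (𝓕⁻ h) :=
  VectorFourier.fourierIntegral_continuous Real.continuous_fourierChar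
    (innerSL ℝ).continuous₂.neg hh

lemma MeasureTheory.Integrable.mul_fourierInv {f : V → ℂ} (hf : Integrable f) (h : V → ℂ) :
    Integrable (fun x => f x * 𝓕⁻ h x) := by
  by_cases hh : Integrable h
  · exact hf.mul_bdd (Real.continuous_fourierInv hh).aestronglyMeasurable
      (ae_of_all _ fun x => VectorFourier.norm_fourierIntegral_le_integral_norm _ _ _ _ _)
  · simp [Real.fourierInv_eq_zero_of_not_integrable hh]

lemma integral_conj_mul_fourierInv_smul_fourier {f : V → ℂ} (hf : Integrable f) {m : V → ℝ}
    (hm : Integrable fun ξ => m ξ • 𝓕 f ξ) :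
    ∫ x, conj (f x) * 𝓕⁻ (fun ξ => m ξ • 𝓕 f ξ) x = ((∫ ξ, m ξ * ‖𝓕 f ξ‖ ^ 2 : ℝ) : ℂ) := by
  have h := VectorFourier.integral_sesq_fourierIntegral_eq_neg_flip (innerSL ℂ) (L := innerₗ V)
    Real.continuous_fourierChar (innerSL ℝ).continuous₂ hf hm
  rw [flip_innerₗ] at h
  simp only [innerSL_apply_apply, RCLike.inner_apply] at h
  change ∫ ξ, m ξ • 𝓕 f ξ * conj (𝓕 f ξ) = ∫ x, 𝓕⁻ (fun ξ => m ξ • 𝓕 f ξ) x * conj (f x) at h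
  simp_rw [mul_comm (conj (f _))]
  rw [← h, ← integral_complex_ofReal]
  simp_rw [Complex.real_smul, mul_assoc, Complex.mul_conj', Complex.ofReal_mul, Complex.ofReal_pow]

lemma integral_mul_re_fourierInv_smul_fourier_nonneg {f : V → ℝ} (hf : Integrable f) {m : V → ℝ}
    (hm : 0 ≤ m) :
    0 ≤ ∫ x, f x * (𝓕⁻ (fun ξ => m ξ • 𝓕 (fun y => (f y : ℂ)) ξ) x).re := by
  by_cases hg : Integrable fun ξ => m ξ • 𝓕 (fun y => (f y : ℂ)) ξ
  · have hfC : Integrable fun x => (f x : ℂ) := hf.ofReal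
    have hfc : Integrable fun x => conj (f x : ℂ) := by simpa only [Complex.conj_ofReal] using hfC
    have hint := integral_re (hfc.mul_fourierInv (fun ξ => m ξ • 𝓕 (fun y => (f y : ℂ)) ξ))
    have hparseval := integral_conj_mul_fourierInv_smul_fourier hfC hg
    simp only [RCLike.re_to_complex, Complex.conj_ofReal, Complex.re_ofReal_mul] at hint hparseval
    rw [hint, hparseval, Complex.ofReal_re]
    exact integral_nonneg fun ξ => mul_nonneg (hm ξ) (sq_nonneg _)
  · rw [Real.fourierInv_eq_zero_of_not_integrable hg]
    simp

end FourierMultiplier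

lemma integrable_mul_fracDR (α : ℝ) {Q : ℝ → ℝ} (hQ : Integrable Q) :
    Integrable fun x => Q x * fracDR α Q x := by
  simpa [fracDR, fracD] using (hQ.ofReal.mul_fourierInv _).re

lemma integral_mul_fracDR_nonneg (α : ℝ) {Q : ℝ → ℝ} (hQ : Integrable Q) :
    0 ≤ ∫ x, Q x * fracDR α Q x :=
  integral_mul_re_fourierInv_smul_fourier_nonneg hQ fun ξ => by positivity

theorem stmt_16_general (α c : ℝ) (p : ℕ)
    (hc : c < 3 / 5) (Q : SchwartzMap ℝ ℝ) (hQ : ∀ x : ℝ, 0 ≤ Q x)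
    (heq : ∀ x : ℝ,
      ((5 / 4) * c - 3 / 4) * fracDR α (⇑Q) x + (c - 1) * Q x - (1 / 2) * (Q x) ^ (p + 1) = 0) :
    ∀ x : ℝ, Q x = 0 := by
  have hQ_int : Integrable Q := Q.integrable
  have hQ_sq : Integrable fun x => Q x ^ 2 := (Q.memLp 2).integrable_sq
  have hpointwise : ∀ x, (1 - c) * Q x ^ 2 ≤ ((5 / 4) * c - 3 / 4) * (Q x * fracDR α Q x) := by
    intro x
    linear_combination (-Q x) * heq x + (1 / 2) * pow_nonneg (hQ x) (p + 2)
  have hmass : (1 - c) * ∫ x, Q x ^ 2 ≤ ((5 / 4) * c - 3 / 4) * ∫ x, Q x * fracDR α Q x := by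
    rw [← integral_const_mul, ← integral_const_mul]
    exact integral_mono (hQ_sq.const_mul _) ((integrable_mul_fracDR α hQ_int).const_mul _) hpointwise
  have hsq_zero : ∫ x, Q x ^ 2 = 0 := by
    have hD : 0 ≤ ∫ x, Q x * fracDR α Q x := integral_mul_fracDR_nonneg α hQ_int
    have hL2 : 0 ≤ ∫ x, Q x ^ 2 := integral_nonneg fun x => sq_nonneg (Q x)
    nlinarith
  have hsq : (fun x => Q x ^ 2) = 0 :=
    ((Q.continuous.pow 2).ae_eq_iff_eq volume continuous_const).mp
      ((integral_eq_zero_iff_of_nonneg (fun x => sq_nonneg (Q x)) hQ_sq).mp hsq_zero)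
  exact fun x => pow_eq_zero_iff two_ne_zero |>.mp (congrFun hsq x)

/-- For c < 3/5, the gfBBM profile equation has no nontrivial nonnegative
smooth decaying solution. -/
theorem stmt_16 (α c : ℝ) (hα : 0 < α) (p : ℕ) (hp : 0 < p)
    (hc : c < 3 / 5) (Q : SchwartzMap ℝ ℝ) (hQ : ∀ x : ℝ, 0 ≤ Q x)
    (heq : ∀ x : ℝ,
      ((5 / 4) * c - 3 / 4) * fracDR α (⇑Q) x + (c - 1) * Q x - (1 / 2) * (Q x) ^ (p + 1) = 0) :
    ∀ x : ℝ, Q x = 0 :=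
  stmt_16_general α c p hc Q hQ heq
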